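/- arXiv:2407.10428 — 2 statements merged into one kernel-verified Lean document; each statement's English description precedes it below -/
import Mathlib

section
/- The generating function of pend(n), the number of partitions of n in which even parts are not distinct (i.e., every even part, if it occurs, occurs at least twice), is given by ∑_{n≥0} pend(n) q^n = (q^2;q^2)_∞ (q^12;q^12)_∞ / ((q;q)_∞ (q^4;q^4)_∞ (q^6;q^6)_∞). -/
open scoped Classical

/-- `fps k` is the infinite product `(q^k; q^k)_∞ = ∏_{n≥1} (1 - q^{kn})`,
defined coefficient-wise via truncated products (factors beyond `n` do not
affect the coefficient of `q^n` when `k ≥ 1`). -/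
noncomputable def fps (k : ℕ) : PowerSeries ℤ :=
  PowerSeries.mk fun n =>
    PowerSeries.coeff (R := ℤ) n
      (∏ i ∈ Finset.range (n + 1), (1 - (PowerSeries.X : PowerSeries ℤ) ^ (k * (i + 1))))

/-- `pend n` is the number of partitions of `n` in which every even part
occurs with multiplicity at least `2`. -/
noncomputable def pend (n : ℕ) : ℕ :=
  (Finset.univ.filter fun P : n.Partition =>
    ∀ i ∈ P.parts, Even i → 2 ≤ P.parts.count i).card


/-!
By `Nat.Partition.hasProd_genFun`, the generating function of `pend` is `∏ᵢ Fᵢ` with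
`Fᵢ = 1/(1 - qⁱ)` for odd `i` and `Fᵢ = 1/(1 - qⁱ) - qⁱ` for even `i`. So `Fᵢ (1 - qⁱ)` is `1`
for odd `i` and `1 - Y + Y²` with `Y = q^{2m}` for `i = 2m`. Multiplying by the `m`-th factors
of `f₄` and `f₆` gives `(1 - Y + Y²)(1 - Y²)(1 - Y³) = (1 - Y)(1 - Y⁶)`, the `m`-th factors of
`f₂ f₁₂`. All these products converge coefficientwise, so the factorwise identity passes to
the limit.
-/

open Finset PowerSeries PowerSeries.WithPiTopology

theorem hasProd_fps {k : ℕ} (hk : 0 < k) :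
    HasProd (fun i ↦ (1 : ℤ⟦X⟧) - X ^ (k * (i + 1))) (fps k) := by
  rw [HasProd, tendsto_iff_coeff_tendsto]
  intro d
  refine tendsto_atTop_of_eventually_const (i₀ := range (d + 1)) fun s hs ↦ ?_
  rw [fps, coeff_mk, ← prod_sdiff hs, mul_comm, coeff_mul_prod_one_sub_of_lt_order]
  intro i hi
  have : d + 1 ≤ i := by simpa using (mem_sdiff.mp hi).2
  rw [order_X_pow]
  norm_cast
  nlinarith

def pendWeight (i c : ℕ) : ℤ := if Even i → 2 ≤ c then 1 else 0

theorem powerSeriesMk_pend_eq_genFun :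
    PowerSeries.mk (fun n ↦ (pend n : ℤ)) = Nat.Partition.genFun pendWeight := by
  ext n
  simp_rw [Nat.Partition.coeff_genFun, coeff_mk, pend, card_filter, Finsupp.prod, pendWeight,
    prod_boole]
  simp

theorem one_add_tsum_pendWeight_mul_one_sub {i : ℕ} (hi : 0 < i) :
    (1 + ∑' j, pendWeight i (j + 1) • (X : ℤ⟦X⟧) ^ (i * (j + 1))) * (1 - X ^ i) =
      1 - if Even i then X ^ i * (1 - X ^ i) else 0 := by
  have hX : constantCoeff ((X : ℤ⟦X⟧) ^ i) = 0 := by simp [hi.ne']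
  have hgeom : Summable fun j ↦ ((X : ℤ⟦X⟧) ^ i) ^ j := summable_pow_of_constantCoeff_eq_zero hX
  have hshift : Summable fun j ↦ ((X : ℤ⟦X⟧) ^ i) ^ (j + 1) := (summable_nat_add_iff 1).mpr hgeom
  have hcorr : Summable fun j : ℕ ↦ if j = 0 then (if Even i then (X : ℤ⟦X⟧) ^ i else 0) else 0 :=
    summable_of_hasFiniteSupport ((Set.finite_singleton 0).subset (by simp))
  have hweight : ∀ j, pendWeight i (j + 1) • (X : ℤ⟦X⟧) ^ (i * (j + 1)) =
      ((X : ℤ⟦X⟧) ^ i) ^ (j + 1) - if j = 0 then (if Even i then X ^ i else 0) else 0 := by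
    intro j
    rcases j with _ | j <;> by_cases h : Even i <;> simp [pendWeight, h, ← pow_mul]
  have hsum : 1 + ∑' j, ((X : ℤ⟦X⟧) ^ i) ^ (j + 1) = ∑' j, ((X : ℤ⟦X⟧) ^ i) ^ j := by
    rw [hgeom.tsum_eq_zero_add, pow_zero]
  rw [tsum_congr hweight, hshift.tsum_sub hcorr, tsum_ite_eq, ← add_sub_assoc, hsum]
  have hinv := tsum_pow_mul_one_sub_of_constantCoeff_eq_zero hX
  split_ifs <;> linear_combination hinv

theorem hasProd_pend_mul_fps_one :
    HasProd (fun m ↦ 1 - (X : ℤ⟦X⟧) ^ (2 * (m + 1)) * (1 - X ^ (2 * (m + 1))))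
      (PowerSeries.mk (fun n ↦ (pend n : ℤ)) * fps 1) := by
  have hfactor : ∀ i : ℕ,
      (1 + ∑' j, pendWeight (i + 1) (j + 1) • (X : ℤ⟦X⟧) ^ ((i + 1) * (j + 1))) *
        (1 - X ^ (1 * (i + 1))) = 1 - if Even (i + 1) then X ^ (i + 1) * (1 - X ^ (i + 1)) else 0 :=
    fun i ↦ by rw [one_mul]; exact one_add_tsum_pendWeight_mul_one_sub i.succ_pos
  have hprod : HasProd
      (fun i ↦ 1 - if Even (i + 1) then (X : ℤ⟦X⟧) ^ (i + 1) * (1 - X ^ (i + 1)) else 0)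
      (PowerSeries.mk (fun n ↦ (pend n : ℤ)) * fps 1) := by
    rw [powerSeriesMk_pend_eq_genFun, ← funext hfactor]
    exact (Nat.Partition.hasProd_genFun pendWeight).mul (hasProd_fps one_pos)
  have hinj : Function.Injective fun m : ℕ ↦ 2 * m + 1 := fun a b hab ↦ by simpa using hab
  have hone : ∀ i ∉ Set.range fun m : ℕ ↦ 2 * m + 1,
      (1 - if Even (i + 1) then (X : ℤ⟦X⟧) ^ (i + 1) * (1 - X ^ (i + 1)) else 0) = 1 := by
    intro i hi
    rw [if_neg fun ⟨k, hk⟩ ↦ hi ⟨k - 1, by dsimp only; omega⟩, sub_zero]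
  convert (hinj.hasProd_iff hone).mpr hprod using 1
  ext1 m
  rw [Function.comp_apply, if_pos ⟨m + 1, by ring⟩]
  ring_nf

/-- Generating function: `∑ pend(n) q^n = f₂ f₁₂ / (f₁ f₄ f₆)`. -/
theorem pend_gf :
    (PowerSeries.mk fun n => (pend n : ℤ)) * fps 1 * fps 4 * fps 6 = fps 2 * fps 12 := by
  have hlhs := (hasProd_pend_mul_fps_one.mul (hasProd_fps (k := 4) (by norm_num))).mul
    (hasProd_fps (k := 6) (by norm_num))
  have hrhs := (hasProd_fps (k := 2) (by norm_num)).mul (hasProd_fps (k := 12) (by norm_num))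
  refine hlhs.unique ?_
  convert hrhs using 1
  ext1 m
  ring
end

section
/- Jacobi's triple product identity: for Ramanujan's theta function f(a,b) := ∑_{n∈ℤ} a^{n(n+1)/2} b^{n(n-1)/2}, one has f(a,b) = (-a; ab)_∞ (-b; ab)_∞ (ab; ab)_∞. -/
/-!
Cauchy's finite form: with `q = uv`, the truncated product `∏_{n<N} (1 + u qⁿ) (1 + v qⁿ)`
equals `∑_k [2N, k]_q u^{T(N-k)} v^{T(k-N)}`, where `T(s) = s(s+1)/2`; adding one factor at a
time, this is exactly the two `q`-Pascal rules. Multiplying by `(q;q)_N`, the product formula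
`[a+b, a]_q (q;q)_a (q;q)_b = (q;q)_{a+b}` shows `[2N, k]_q (q;q)_N ≡ 1 mod q^{min(k, 2N-k)+1}`.
For `N` larger than the total degree of `uⁱ vʲ`, only the term `k = N + j - i` can contribute to
its coefficient, and it does so through a power of `q` below that bound.
-/

open Finset

section GaussianBinomial

open Polynomial

noncomputable def qPochhammer (n : ℕ) : ℤ[X] := ∏ j ∈ range n, (1 - X ^ (j + 1))

noncomputable def qBinomial : ℕ → ℕ → ℤ[X]
  | _, 0 => 1
  | 0, _ + 1 => 0
  | n + 1, k + 1 => qBinomial n k + X ^ (k + 1) * qBinomial n (k + 1)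

@[simp] lemma qBinomial_zero_right (n : ℕ) : qBinomial n 0 = 1 := by cases n <;> rfl

lemma qBinomial_succ_succ (n k : ℕ) :
    qBinomial (n + 1) (k + 1) = qBinomial n k + X ^ (k + 1) * qBinomial n (k + 1) := rfl

lemma qBinomial_eq_zero_of_lt : ∀ {n k : ℕ}, n < k → qBinomial n k = 0
  | 0, _ + 1, _ => rfl
  | n + 1, k + 1, h => by
    rw [qBinomial_succ_succ, qBinomial_eq_zero_of_lt (by omega),
      qBinomial_eq_zero_of_lt (by omega), mul_zero, add_zero]

@[simp] lemma qBinomial_self : ∀ n : ℕ, qBinomial n n = 1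
  | 0 => rfl
  | n + 1 => by
    rw [qBinomial_succ_succ, qBinomial_self n, qBinomial_eq_zero_of_lt n.lt_succ_self,
      mul_zero, add_zero]

@[simp] lemma qPochhammer_zero : qPochhammer 0 = 1 := prod_range_zero _

lemma qPochhammer_succ (n : ℕ) : qPochhammer (n + 1) = qPochhammer n * (1 - X ^ (n + 1)) :=
  prod_range_succ _ _

lemma qPochhammer_ne_zero (n : ℕ) : qPochhammer n ≠ 0 := by
  intro h
  simpa [qPochhammer, eval_prod] using congrArg (eval 0) h

lemma qBinomial_mul_qPochhammer_mul_qPochhammer :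
    ∀ {a b n : ℕ}, a + b = n → qBinomial n a * qPochhammer a * qPochhammer b = qPochhammer n
  | 0, b, _, rfl => by simp
  | a + 1, 0, _, rfl => by simp
  | a + 1, b + 1, _, rfl => by
    have h₁ := qBinomial_mul_qPochhammer_mul_qPochhammer (a := a) (b := b + 1) (n := a + 1 + b)
      (by omega)
    have h₂ := qBinomial_mul_qPochhammer_mul_qPochhammer (a := a + 1) (b := b) rfl
    rw [qPochhammer_succ b] at h₁
    rw [qPochhammer_succ a] at h₂
    rw [show a + 1 + (b + 1) = a + 1 + b + 1 by omega, qBinomial_succ_succ, qPochhammer_succ a,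
      qPochhammer_succ b, qPochhammer_succ (a + 1 + b)]
    linear_combination (1 - X ^ (a + 1)) * h₁ + X ^ (a + 1) * (1 - X ^ (b + 1)) * h₂

lemma qBinomial_symm {a b n : ℕ} (h : a + b = n) : qBinomial n a = qBinomial n b :=
  mul_right_cancel₀ (mul_ne_zero (qPochhammer_ne_zero a) (qPochhammer_ne_zero b)) <| by
    rw [← mul_assoc, qBinomial_mul_qPochhammer_mul_qPochhammer h, mul_comm (qPochhammer a),
      ← mul_assoc, qBinomial_mul_qPochhammer_mul_qPochhammer ((add_comm b a).trans h)]

lemma qBinomial_succ_succ' (n k : ℕ) :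
    qBinomial (n + 1) (k + 1) = X ^ (n - k) * qBinomial n k + qBinomial n (k + 1) := by
  rcases lt_trichotomy k n with hk | rfl | hk
  · obtain ⟨b, rfl⟩ : ∃ b, n = k + 1 + b := ⟨n - (k + 1), by omega⟩
    refine mul_right_cancel₀
      (mul_ne_zero (qPochhammer_ne_zero (k + 1)) (qPochhammer_ne_zero (b + 1))) ?_
    have h₀ := qBinomial_mul_qPochhammer_mul_qPochhammer (a := k + 1) (b := b + 1)
      (n := k + 1 + b + 1) (by omega)
    have h₁ := qBinomial_mul_qPochhammer_mul_qPochhammer (a := k) (b := b + 1)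
      (n := k + 1 + b) (by omega)
    have h₂ := qBinomial_mul_qPochhammer_mul_qPochhammer (a := k + 1) (b := b) rfl
    rw [show k + 1 + b - k = b + 1 by omega]
    simp only [qPochhammer_succ k, qPochhammer_succ b, qPochhammer_succ (k + 1 + b)]
      at h₀ h₁ h₂ ⊢
    linear_combination h₀ - X ^ (b + 1) * (1 - X ^ (k + 1)) * h₁ - (1 - X ^ (b + 1)) * h₂
  · simp [qBinomial_eq_zero_of_lt]
  · simp [qBinomial_eq_zero_of_lt, hk, hk.trans (Nat.lt_succ_self k)]

lemma qPochhammer_eq_mul_prod_Ico {a b : ℕ} (h : a ≤ b) :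
    qPochhammer b = qPochhammer a * ∏ j ∈ Ico a b, (1 - X ^ (j + 1)) :=
  (prod_range_mul_prod_Ico _ h).symm

lemma mk_prod_Ico_one_sub_X_pow {a b c : ℕ} (h : c ≤ a) :
    Ideal.Quotient.mk (Ideal.span {X ^ (c + 1)})
      (∏ j ∈ Ico a b, (1 - X ^ (j + 1)) : ℤ[X]) = 1 := by
  rw [map_prod]
  refine prod_eq_one fun j hj => ?_
  have hdvd : X ^ (c + 1) ∣ (X : ℤ[X]) ^ (j + 1) := pow_dvd_pow X (by simp at hj; omega)
  rw [map_sub, map_one, (Ideal.Quotient.eq_zero_iff_dvd _ _).2 hdvd, sub_zero]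

lemma mk_qBinomial_mul_qPochhammer_of_le {a b m : ℕ} (hab : a ≤ b) (ham : a ≤ m) :
    Ideal.Quotient.mk (Ideal.span {X ^ (a + 1)}) (qBinomial (a + b) a * qPochhammer m) = 1 := by
  have hquot :
      qBinomial (a + b) a * qPochhammer a = ∏ j ∈ Ico b (a + b), (1 - X ^ (j + 1)) := by
    refine mul_left_cancel₀ (qPochhammer_ne_zero b) ?_
    rw [← qPochhammer_eq_mul_prod_Ico (by omega),
      ← qBinomial_mul_qPochhammer_mul_qPochhammer rfl]
    ring
  rw [qPochhammer_eq_mul_prod_Ico ham, ← mul_assoc, hquot, map_mul, mk_prod_Ico_one_sub_X_pow hab,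
    mk_prod_Ico_one_sub_X_pow le_rfl, one_mul]

lemma coeff_qBinomial_mul_qPochhammer {a b m w : ℕ} (hm : min a b ≤ m) (hw : w ≤ min a b) :
    (qBinomial (a + b) a * qPochhammer m).coeff w = if w = 0 then 1 else 0 := by
  have hmk : Ideal.Quotient.mk (Ideal.span {X ^ (min a b + 1)})
      (qBinomial (a + b) a * qPochhammer m) = 1 := by
    rcases le_total a b with hab | hba
    · rw [min_eq_left hab]
      exact mk_qBinomial_mul_qPochhammer_of_le hab (by omega)
    · rw [qBinomial_symm rfl, min_eq_right hba, Nat.add_comm a b]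
      exact mk_qBinomial_mul_qPochhammer_of_le hba (by omega)
  rw [← map_one (Ideal.Quotient.mk _), Ideal.Quotient.eq, Ideal.mem_span_singleton,
    X_pow_dvd_iff] at hmk
  rw [← coeff_one, ← sub_eq_zero, ← coeff_sub]
  exact hmk w (by omega)

end GaussianBinomial

section FiniteTripleProduct

open Polynomial (aeval)

def triangular (s : ℤ) : ℕ := (s * (s + 1) / 2).toNat

lemma two_mul_triangular (s : ℤ) : 2 * (triangular s : ℤ) = s * (s + 1) := by
  have : 0 ≤ s * (s + 1) := by rcases le_or_gt 0 s with hs | hs <;> nlinarith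
  rw [triangular, Int.toNat_of_nonneg (by omega),
    Int.two_mul_ediv_two_of_even (Int.even_mul_succ_self s)]

lemma triangular_add_one (s : ℤ) : (triangular (s + 1) : ℤ) = triangular s + s + 1 := by
  have h₁ := two_mul_triangular s
  have h₂ := two_mul_triangular (s + 1)
  linarith

lemma triangular_sub_triangular_neg (s : ℤ) : (triangular s : ℤ) - triangular (-s) = s := by
  have h₁ := two_mul_triangular s
  have h₂ := two_mul_triangular (-s)
  linarith

variable {R : Type*} [CommRing R] (u v : R)

/-- The term `n = -s` of `f(u, v) = ∑ₙ u^{n(n+1)/2} v^{n(n-1)/2}`. -/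
def thetaMonomial (s : ℤ) : R := u ^ triangular (-s) * v ^ triangular s

lemma mul_thetaMonomial_left {N a : ℕ} {s : ℤ} (h : (a : ℤ) = s + N) :
    u * (u * v) ^ N * thetaMonomial u v s = (u * v) ^ a * thetaMonomial u v (s - 1) := by
  have h₁ := triangular_add_one (-s)
  have h₂ := triangular_add_one (s - 1)
  rw [show -s + 1 = -(s - 1) by ring, sub_add_cancel] at *
  have e₁ : a + triangular (-(s - 1)) = 1 + N + triangular (-s) := by omega
  have e₂ : a + triangular (s - 1) = N + triangular s := by omega
  calc _ = u ^ (1 + N + triangular (-s)) * v ^ (N + triangular s) := by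
        rw [thetaMonomial]; ring
    _ = _ := by rw [← e₁, ← e₂, thetaMonomial]; ring

lemma mul_thetaMonomial_right {M a : ℕ} {s : ℤ} (h : (a : ℤ) = M - s) :
    v * (u * v) ^ M * thetaMonomial u v s = (u * v) ^ a * thetaMonomial u v (s + 1) := by
  have h₁ := triangular_add_one s
  have h₂ := triangular_add_one (-(s + 1))
  rw [show -(s + 1) + 1 = -s by ring] at h₂
  have e₁ : a + triangular (-(s + 1)) = M + triangular (-s) := by omega
  have e₂ : a + triangular (s + 1) = 1 + M + triangular s := by omega
  calc _ = u ^ (M + triangular (-s)) * v ^ (1 + M + triangular s) := by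
        rw [thetaMonomial]; ring
    _ = _ := by rw [← e₁, ← e₂, thetaMonomial]; ring

variable [Algebra ℤ R]

noncomputable def finiteTheta (N M : ℕ) : R :=
  ∑ k ∈ range (N + M + 1), aeval (u * v) (qBinomial (N + M) k) * thetaMonomial u v (k - N)

lemma finiteTheta_succ_left (N M : ℕ) :
    finiteTheta u v (N + 1) M = finiteTheta u v N M * (1 + u * (u * v) ^ N) := by
  set B : ℕ → R := fun k => aeval (u * v) (qBinomial (N + M) k)
  set m : ℤ → R := thetaMonomial u v
  have hB₀ : B 0 = 1 := by simp only [B, qBinomial_zero_right, map_one]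
  have hB : B (N + M + 1) = 0 := by
    simp only [B, qBinomial_eq_zero_of_lt (Nat.lt_succ_self _), map_zero]
  have hshift (k : ℕ) :
      (u * v) ^ k * B k * m (k - N - 1) = B k * m (k - N) * (u * (u * v) ^ N) := by
    have h : u * (u * v) ^ N * m (k - N) = (u * v) ^ k * m (k - N - 1) :=
      mul_thetaMonomial_left u v (by ring)
    linear_combination -B k * h
  calc finiteTheta u v (N + 1) M
      = ∑ k ∈ range (N + M + 1), (B k * m (k - N) + (u * v) ^ (k + 1) * B (k + 1) * m (k - N))
          + m (-(N + 1)) := by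
        rw [finiteTheta, show N + 1 + M = N + M + 1 by omega, sum_range_succ']
        simp only [qBinomial_succ_succ, qBinomial_zero_right, map_one, map_add, map_mul, map_pow,
          Polynomial.aeval_X, one_mul, add_mul, Nat.cast_add, Nat.cast_one, Nat.cast_zero,
          add_sub_add_right_eq_sub, zero_sub]
        rfl
    _ = ∑ k ∈ range (N + M + 1), B k * m (k - N)
          + ∑ k ∈ range (N + M + 1), (u * v) ^ k * B k * m (k - N - 1) := by
        rw [sum_add_distrib, sum_range_succ (fun k => (u * v) ^ (k + 1) * B (k + 1) * m (k - N)),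
          hB, sum_range_succ' (fun k => (u * v) ^ k * B k * m (k - N - 1)), hB₀]
        push_cast
        simp only [sub_right_comm _ (N : ℤ) 1, add_sub_cancel_right, zero_sub, pow_zero, neg_add',
          mul_zero, zero_mul, add_zero, one_mul, add_assoc]
    _ = finiteTheta u v N M * (1 + u * (u * v) ^ N) := by
        simp only [hshift, mul_one_add, finiteTheta, sum_mul]
        rfl

lemma finiteTheta_succ_right (N M : ℕ) :
    finiteTheta u v N (M + 1) = finiteTheta u v N M * (1 + v * (u * v) ^ M) := by
  set B : ℕ → R := fun k => aeval (u * v) (qBinomial (N + M) k)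
  set m : ℤ → R := thetaMonomial u v
  have hB₀ : B 0 = 1 := by simp only [B, qBinomial_zero_right, map_one]
  have hB : B (N + M + 1) = 0 := by
    simp only [B, qBinomial_eq_zero_of_lt (Nat.lt_succ_self _), map_zero]
  have hshift (k : ℕ) (hk : k ∈ range (N + M + 1)) :
      (u * v) ^ (N + M - k) * B k * m (k + 1 - N) = B k * m (k - N) * (v * (u * v) ^ M) := by
    have h : v * (u * v) ^ M * m (k - N) = (u * v) ^ (N + M - k) * m (k - N + 1) :=
      mul_thetaMonomial_right u v (by simp at hk; omega)
    rw [sub_add_eq_add_sub] at h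
    linear_combination -B k * h
  calc finiteTheta u v N (M + 1)
      = ∑ k ∈ range (N + M + 1), ((u * v) ^ (N + M - k) * B k * m (k + 1 - N)
          + B (k + 1) * m (k + 1 - N)) + m (-N) := by
        rw [finiteTheta, show N + (M + 1) = N + M + 1 by omega, sum_range_succ']
        simp only [qBinomial_succ_succ', qBinomial_zero_right, map_one, map_add, map_mul, map_pow,
          Polynomial.aeval_X, one_mul, add_mul, Nat.cast_add, Nat.cast_one, Nat.cast_zero, zero_sub]
        rfl
    _ = ∑ k ∈ range (N + M + 1), (u * v) ^ (N + M - k) * B k * m (k + 1 - N)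
          + ∑ k ∈ range (N + M + 1), B k * m (k - N) := by
        rw [sum_add_distrib, sum_range_succ (fun k => B (k + 1) * m (k + 1 - N)), hB,
          sum_range_succ' (fun k => B k * m (k - N)), hB₀]
        push_cast
        simp only [zero_mul, add_zero, one_mul, zero_sub, add_assoc]
    _ = finiteTheta u v N M * (1 + v * (u * v) ^ M) := by
        rw [sum_congr rfl hshift, mul_one_add, add_comm, finiteTheta, sum_mul]

lemma prod_mul_prod_eq_finiteTheta (N M : ℕ) :
    (∏ n ∈ range N, (1 + u * (u * v) ^ n)) * ∏ n ∈ range M, (1 + v * (u * v) ^ n)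
      = finiteTheta u v N M := by
  induction M with
  | zero =>
    induction N with
    | zero => simp [finiteTheta, thetaMonomial, triangular]
    | succ N ih => rw [prod_range_succ, finiteTheta_succ_left, ← ih, prod_range_zero, mul_one,
        mul_one]
  | succ M ih => rw [prod_range_succ, finiteTheta_succ_right, ← ih, mul_assoc]

lemma prod_triple_eq_finiteTheta_mul_qPochhammer (N : ℕ) :
    ∏ n ∈ range N, ((1 + u * (u * v) ^ n) * (1 + v * (u * v) ^ n) * (1 - (u * v) ^ (n + 1)))
      = finiteTheta u v N N * aeval (u * v) (qPochhammer N) := by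
  rw [prod_mul_distrib, prod_mul_distrib, prod_mul_prod_eq_finiteTheta, qPochhammer, map_prod]
  simp only [map_sub, map_one, map_pow, Polynomial.aeval_X]

end FiniteTripleProduct

section Coefficients

open MvPowerSeries

lemma single_add_single_eq_iff {a b : ℕ} {d : Fin 2 →₀ ℕ} :
    Finsupp.single 0 a + Finsupp.single 1 b = d ↔ d 0 = a ∧ d 1 = b := by
  constructor
  · rintro rfl
    simp
  · rintro ⟨h₀, h₁⟩
    ext i
    fin_cases i <;> simp [h₀, h₁]

variable {R : Type*} [CommRing R]

lemma coeff_aeval_X_mul_X_mul (p : Polynomial R) (a b : ℕ) (d : Fin 2 →₀ ℕ) :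
    coeff d (Polynomial.aeval (X 0 * X 1 : MvPowerSeries (Fin 2) R) p * (X 0 ^ a * X 1 ^ b))
      = if a ≤ d 0 ∧ d 0 + b = d 1 + a then p.coeff (d 0 - a) else 0 := by
  induction p using Polynomial.induction_on' with
  | add p q hp hq =>
    rw [map_add, add_mul, map_add, hp, hq, Polynomial.coeff_add]
    split_ifs <;> simp
  | monomial n c =>
    have hmono : Polynomial.aeval (X 0 * X 1 : MvPowerSeries (Fin 2) R) (Polynomial.monomial n c)
          * (X 0 ^ a * X 1 ^ b)
        = monomial (Finsupp.single 0 (n + a) + Finsupp.single 1 (n + b)) c := by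
      simp only [Polynomial.aeval_monomial, X_pow_eq, mul_pow, monomial_mul_monomial,
        MvPowerSeries.algebraMap_apply, Algebra.algebraMap_self, RingHom.id_apply,
        ← monomial_zero_eq_C_apply, mul_one, Finsupp.single_add]
      congr 2
      abel
    simp only [hmono, coeff_monomial, eq_comm (a := d), single_add_single_eq_iff,
      Polynomial.coeff_monomial]
    by_cases h : a ≤ d 0 ∧ d 0 + b = d 1 + a
    · simp only [if_pos h]
      exact if_congr (by omega) rfl rfl
    · simp only [if_neg h]
      exact if_neg (by omega)

/-- The `k`-th summand only involves monomials `X₀ⁱ X₁ʲ` with `j - i = k - N`. -/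
lemma coeff_sum_aeval_mul_thetaMonomial (N : ℕ) (f : ℕ → Polynomial R) (d : Fin 2 →₀ ℕ)
    (h₀ : d 0 ≤ N + d 1) (h₁ : d 1 ≤ N + d 0) :
    coeff d (∑ k ∈ range (N + N + 1),
        Polynomial.aeval (X 0 * X 1 : MvPowerSeries (Fin 2) R) (f k)
          * thetaMonomial (X 0) (X 1) (k - N))
      = if triangular (d 0 - d 1) ≤ d 0
        then (f (N + d 1 - d 0)).coeff (d 0 - triangular (d 0 - d 1)) else 0 := by
  rw [map_sum, sum_eq_single (N + d 1 - d 0)]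
  · rw [show ((N + d 1 - d 0 : ℕ) : ℤ) - N = -(d 0 - d 1) by omega, thetaMonomial, neg_neg,
      coeff_aeval_X_mul_X_mul]
    have := triangular_sub_triangular_neg (d 0 - d 1)
    exact if_congr (by omega) rfl rfl
  · intro k _ hk
    rw [thetaMonomial, coeff_aeval_X_mul_X_mul, if_neg]
    have := triangular_sub_triangular_neg (k - N)
    omega
  · intro h
    exact absurd (mem_range.2 (by omega)) h

end Coefficients

/-- Stated coefficient-wise: factors with index beyond the total degree do not affect the
coefficient, and the coefficient of `a^i b^j` in `f(a,b)` is `1` iff `i - j = n` with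
`n(n+1)/2 = i` (hence `n(n-1)/2 = j`), and `0` otherwise. -/
theorem jacobi_triple_product :
    ∀ d : Fin 2 →₀ ℕ,
      MvPowerSeries.coeff d
        (∏ n ∈ Finset.range (d 0 + d 1 + 1),
          ((1 + (MvPowerSeries.X 0 : MvPowerSeries (Fin 2) ℤ)
              * (MvPowerSeries.X 0 * MvPowerSeries.X 1) ^ n)
            * (1 + (MvPowerSeries.X 1 : MvPowerSeries (Fin 2) ℤ)
              * (MvPowerSeries.X 0 * MvPowerSeries.X 1) ^ n)
            * (1 - ((MvPowerSeries.X 0 : MvPowerSeries (Fin 2) ℤ)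
              * MvPowerSeries.X 1) ^ (n + 1))))
      = if ((d 0 : ℤ) - (d 1 : ℤ)) * ((d 0 : ℤ) - (d 1 : ℤ) + 1) = 2 * (d 0 : ℤ)
        then 1 else 0 := by
  intro d
  set N := d 0 + d 1 + 1
  rw [prod_triple_eq_finiteTheta_mul_qPochhammer, finiteTheta, sum_mul]
  simp only [mul_right_comm _ (thetaMonomial _ _ _), ← map_mul]
  rw [coeff_sum_aeval_mul_thetaMonomial N (fun k => qBinomial (N + N) k * qPochhammer N) d
    (by omega) (by omega), show N + N = (2 * d 1 + 1) + (2 * d 0 + 1) by omega,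
    show N + d 1 - d 0 = 2 * d 1 + 1 by omega]
  have hT := two_mul_triangular (d 0 - d 1)
  have hT' := triangular_sub_triangular_neg (d 0 - d 1)
  by_cases h : triangular (d 0 - d 1) ≤ d 0
  · rw [if_pos h, coeff_qBinomial_mul_qPochhammer (by omega) (by omega)]
    exact if_congr (by omega) rfl rfl
  · rw [if_neg h, if_neg (by omega)]
end
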